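/- With the metric Lie algebra of the previous statement (brackets [x₁,xᵢ]=xᵢ, [x₁,xₙ]=−λx₁+xₙ, [xᵢ,xₙ]=−λxᵢ, pseudo-orthonormal basis with signs εᵢ), the curvature tensor R(X,Y) = [∇_X, ∇_Y] − ∇_{[X,Y]} satisfies R(X,Y) = −(λ²εₙ + ε₁)·(X ∧ Y) for all X, Y, where (X ∧ Y)Z = ⟨Y,Z⟩X − ⟨X,Z⟩Y. -/

import Mathlib

/-!
The brackets are those of Milnor's Lie algebras of constant negative curvature:
`[X, Y] = ⟨H, X⟩ Y - ⟨H, Y⟩ X` with `H = ε₁ x₁ + λ εₙ xₙ`, since `⟨H, ·⟩` takes the values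
`1`, `λ`, `0` on `x₁`, `xₙ` and the remaining basis vectors. For such a bracket the Koszul
formula gives `∇_X Y = ⟨X, Y⟩ H - ⟨H, Y⟩ X`, and expanding `R(X, Y)` shows that the metric has
constant curvature `-⟨H, H⟩ = -(ε₁ + λ² εₙ)`.
-/

theorem nondegenerate_of_orthogonal_basis {K L ι : Type*} [Field K] [AddCommGroup L]
    [Module K L] [DecidableEq ι] (B : LinearMap.BilinForm K L) (x : Module.Basis ι K L)
    (ε : ι → K) (hε : ∀ i, ε i ≠ 0) (hortho : ∀ i j, B (x i) (x j) = if i = j then ε i else 0) :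
    B.Nondegenerate :=
  (LinearMap.BilinForm.iIsOrtho.nondegenerate_iff_not_isOrtho_basis_self B x
    (LinearMap.BilinForm.iIsOrtho_def.2 fun i j hij => by simp [hortho, hij])).2
    fun i => by simpa [hortho] using hε i

section LieBracketOfCovector

variable {K L : Type*} [LieRing L]

theorem lie_eq_smul_sub_smul_of_basis [Field K] [LieAlgebra K L] (B : LinearMap.BilinForm K L)
    (H : L) {ι : Type*} (x : Module.Basis ι K L) (h : ∀ i j, ⁅x i, x j⁆ = B H (x i) • x j - B H (x j) • x i)
    (X Y : L) : ⁅X, Y⁆ = B H X • Y - B H Y • X := by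
  let bracket : L →ₗ[K] L →ₗ[K] L :=
    LinearMap.mk₂ K (fun X Y => ⁅X, Y⁆) add_lie smul_lie lie_add lie_smul
  let rhs : L →ₗ[K] L →ₗ[K] L :=
    LinearMap.mk₂ K (fun X Y => B H X • Y - B H Y • X)
      (fun _ _ _ => by simp only [map_add]; module)
      (fun _ _ _ => by simp only [map_smul, smul_eq_mul]; module)
      (fun _ _ _ => by simp only [map_add]; module)
      (fun _ _ _ => by simp only [map_smul, smul_eq_mul]; module)
  exact LinearMap.congr_fun₂ (LinearMap.ext_basis x x h : bracket = rhs) X Y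

theorem koszul_connection_eq [Field K] [CharZero K] [LieAlgebra K L]
    (B : LinearMap.BilinForm K L) (H : L) (hsymm : ∀ X Y, B X Y = B Y X) (hnd : B.Nondegenerate)
    (hlie : ∀ X Y : L, ⁅X, Y⁆ = B H X • Y - B H Y • X) (D : L → L → L)
    (hKoszul : ∀ X Y Z : L, 2 * B (D X Y) Z = B ⁅X, Y⁆ Z + B ⁅Z, X⁆ Y + B X ⁅Z, Y⁆)
    (X Y : L) : D X Y = B X Y • H - B H Y • X := by
  rw [← sub_eq_zero]
  refine hnd.1 _ fun Z => ?_
  have h := hKoszul X Y Z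
  simp only [hlie, map_sub, map_smul, LinearMap.sub_apply, LinearMap.smul_apply,
    smul_eq_mul] at h ⊢
  rw [hsymm Z Y] at h
  linear_combination h / 2

theorem curvature_eq_neg_smul_wedge [CommRing K] [LieAlgebra K L]
    (B : LinearMap.BilinForm K L) (H : L) (hsymm : ∀ X Y, B X Y = B Y X) (hlie : ∀ X Y : L, ⁅X, Y⁆ = B H X • Y - B H Y • X)
    (D : L → L → L) (hD : ∀ X Y, D X Y = B X Y • H - B H Y • X) (X Y Z : L) :
    D X (D Y Z) - D Y (D X Z) - D ⁅X, Y⁆ Z = -B H H • (B Y Z • X - B X Z • Y) := by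
  simp only [hD, hlie, map_sub, map_smul, LinearMap.sub_apply, LinearMap.smul_apply,
    smul_eq_mul]
  rw [hsymm X H, hsymm Y H, hsymm Y X]
  module

end LieBracketOfCovector

section HyperbolicLieAlgebra

variable {n : ℕ} {K L : Type*} [CommRing K] [LieRing L] [LieAlgebra K L]

theorem lie_basis_eq_smul_sub_smul (x : Fin n → L) (lam : K) (z ℓ : Fin n)
    (hx1 : ∀ i : Fin n, i ≠ z → i ≠ ℓ → ⁅x z, x i⁆ = x i)
    (hx2 : ⁅x z, x ℓ⁆ = -lam • x z + x ℓ)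
    (hx3 : ∀ i : Fin n, i ≠ z → i ≠ ℓ → ⁅x i, x ℓ⁆ = -lam • x i)
    (hx4 : ∀ i j : Fin n, i ≠ z → i ≠ ℓ → j ≠ z → j ≠ ℓ → ⁅x i, x j⁆ = 0)
    (f : L → K) (hfz : f (x z) = 1) (hfℓ : f (x ℓ) = lam)
    (hf : ∀ i, i ≠ z → i ≠ ℓ → f (x i) = 0) (i j : Fin n) :
    ⁅x i, x j⁆ = f (x i) • x j - f (x j) • x i := by
  have trichotomy (k : Fin n) : k = z ∨ k = ℓ ∨ (k ≠ z ∧ k ≠ ℓ) := by tauto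
  rcases trichotomy i with rfl | rfl | ⟨hiz, hiℓ⟩ <;>
    rcases trichotomy j with rfl | rfl | ⟨hjz, hjℓ⟩
  · simp
  · rw [hx2, hfz, hfℓ]; module
  · rw [hx1 j hjz hjℓ, hfz, hf j hjz hjℓ]; simp
  · rw [← lie_skew, hx2, hfz, hfℓ]; module
  · simp
  · rw [← lie_skew, hx3 j hjz hjℓ, hfℓ, hf j hjz hjℓ]; simp
  · rw [← lie_skew, hx1 i hiz hiℓ, hfz, hf i hiz hiℓ]; simp
  · rw [hx3 i hiz hiℓ, hfℓ, hf i hiz hiℓ]; simp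
  · rw [hx4 i j hiz hiℓ hjz hjℓ, hf i hiz hiℓ, hf j hjz hjℓ]; simp

def bracketVector (x : Fin n → L) (ε : Fin n → K) (lam : K) (z ℓ : Fin n) : L :=
  ε z • x z + (lam * ε ℓ) • x ℓ

variable (B : LinearMap.BilinForm K L) (x : Fin n → L) (ε : Fin n → K) (lam : K) {z ℓ : Fin n}

theorem bracketVector_apply_basis (hε : ∀ i, ε i * ε i = 1)
    (hortho : ∀ i j, B (x i) (x j) = if i = j then ε i else 0) (hzℓ : z ≠ ℓ) (i : Fin n) :
    B (bracketVector x ε lam z ℓ) (x i) = if i = z then 1 else if i = ℓ then lam else 0 := by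
  simp only [bracketVector, map_add, map_smul, LinearMap.add_apply, LinearMap.smul_apply,
    smul_eq_mul, hortho]
  by_cases hiz : i = z
  · subst hiz; simp [hzℓ.symm, hε]
  · by_cases hiℓ : i = ℓ
    · subst hiℓ; simp [hiz, hzℓ, mul_assoc, hε]
    · simp [Ne.symm hiz, Ne.symm hiℓ, hiz, hiℓ]

theorem bracketVector_apply_self (hε : ∀ i, ε i * ε i = 1)
    (hortho : ∀ i j, B (x i) (x j) = if i = j then ε i else 0) (hzℓ : z ≠ ℓ) :
    B (bracketVector x ε lam z ℓ) (bracketVector x ε lam z ℓ) = ε z + lam ^ 2 * ε ℓ := by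
  conv_lhs => arg 2; rw [bracketVector]
  simp only [map_add, map_smul, smul_eq_mul,
    bracketVector_apply_basis B x ε lam hε hortho hzℓ, hzℓ.symm, if_true, if_false]
  ring

end HyperbolicLieAlgebra

theorem stmt_13 (n : ℕ) (hn : 2 ≤ n) (lam : ℝ)
    {L : Type*} [LieRing L] [LieAlgebra ℝ L]
    (B : LinearMap.BilinForm ℝ L) (hBsymm : ∀ X Y : L, B X Y = B Y X)
    (x : Module.Basis (Fin n) ℝ L) (ε : Fin n → ℝ) (hε : ∀ i, ε i = 1 ∨ ε i = -1)
    (hortho : ∀ i j : Fin n, B (x i) (x j) = if i = j then ε i else 0)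
    (z ℓ : Fin n) (hz : (z : ℕ) = 0) (hℓ : (ℓ : ℕ) = n - 1)
    (hx1 : ∀ i : Fin n, i ≠ z → i ≠ ℓ → ⁅x z, x i⁆ = x i)
    (hx2 : ⁅x z, x ℓ⁆ = -lam • x z + x ℓ)
    (hx3 : ∀ i : Fin n, i ≠ z → i ≠ ℓ → ⁅x i, x ℓ⁆ = -lam • x i)
    (hx4 : ∀ i j : Fin n, i ≠ z → i ≠ ℓ → j ≠ z → j ≠ ℓ → ⁅x i, x j⁆ = 0)
    (D : L → L → L)
    (hKoszul : ∀ X Y Z : L,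
      2 * B (D X Y) Z = B ⁅X, Y⁆ Z + B ⁅Z, X⁆ Y + B X ⁅Z, Y⁆) :
    ∀ X Y Z : L,
      D X (D Y Z) - D Y (D X Z) - D ⁅X, Y⁆ Z =
        -(lam ^ 2 * ε ℓ + ε z) • (B Y Z • X - B X Z • Y) := by
  have hzℓ : z ≠ ℓ := fun h => by rw [h] at hz; omega
  have hε2 (i : Fin n) : ε i * ε i = 1 := by rcases hε i with h | h <;> simp [h]
  have hH := bracketVector_apply_basis B x ε lam hε2 hortho hzℓ
  have hlie := lie_eq_smul_sub_smul_of_basis B (bracketVector x ε lam z ℓ) x <|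
    lie_basis_eq_smul_sub_smul x lam z ℓ hx1 hx2 hx3 hx4 (B _) (by simp [hH])
      (by simp [hH, hzℓ.symm]) fun i hiz hiℓ => by simp [hH, hiz, hiℓ]
  have hnd := nondegenerate_of_orthogonal_basis B x ε
    (fun i => left_ne_zero_of_mul_eq_one (hε2 i)) hortho
  have hD := koszul_connection_eq B _ hBsymm hnd hlie D hKoszul
  intro X Y Z
  rw [curvature_eq_neg_smul_wedge B _ hBsymm hlie D hD,
    bracketVector_apply_self B x ε lam hε2 hortho hzℓ, add_comm]
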